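/- Let F ⊆ ℝⁿ be non-empty and a > 0. Set O := {x ∈ ℝⁿ : 0 < d(x,F) ≤ a·m(x)} and O' := {x ∈ ℝⁿ : 0 < d(x,F) < 2a·m(x)}. Then γ(O') ≤ C γ(O), where C depends only on a and the dimension n. -/

import Mathlib

open MeasureTheory Metric Set
open scoped ENNReal NNReal BigOperators

noncomputable section

/-- The gaussian measure `dγ(x) = (2π)^{-n/2} exp(-|x|²/2) dx` on `ℝⁿ`. -/
def gaussMeasure (n : ℕ) : Measure (EuclideanSpace ℝ (Fin n)) :=
  volume.withDensity fun x =>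
    ENNReal.ofReal ((2 * Real.pi) ^ (-(n : ℝ) / 2) * Real.exp (-‖x‖ ^ 2 / 2))

/-- `m(x) = min {1, 1/‖x‖}`. -/
def mfun {n : ℕ} (x : EuclideanSpace ℝ (Fin n)) : ℝ :=
  if ‖x‖ ≤ 1 then 1 else ‖x‖⁻¹

/-- Ornstein–Uhlenbeck (Mehler) semigroup `e^{-tL} u (x)`. -/
def mehler (n : ℕ) (u : EuclideanSpace ℝ (Fin n) → ℝ) (t : ℝ)
    (x : EuclideanSpace ℝ (Fin n)) : ℝ :=
  ∫ y, u (Real.exp (-t) • x + Real.sqrt (1 - Real.exp (-2 * t)) • y) ∂gaussMeasure n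

/-- The gaussian conical square function `S_a u (x)`. -/
def Sfun (n : ℕ) (a : ℝ) (u : EuclideanSpace ℝ (Fin n) → ℝ)
    (x : EuclideanSpace ℝ (Fin n)) : ℝ≥0∞ :=
  (∫⁻ t in Set.Ioo (0 : ℝ) (a * mfun x),
      (∫⁻ y in ball x t,
        (gaussMeasure n (ball y t))⁻¹ *
          ENNReal.ofReal ((t * ‖fderiv ℝ (mehler n u (t ^ 2)) y‖) ^ 2) ∂gaussMeasure n) /
        ENNReal.ofReal t) ^ (1 / 2 : ℝ)

/-- The gaussian non-tangential maximal function `T*_{(A,a)} u (x)`. -/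
def Tstar (n : ℕ) (A a : ℝ) (u : EuclideanSpace ℝ (Fin n) → ℝ)
    (x : EuclideanSpace ℝ (Fin n)) : ℝ≥0∞ :=
  ⨆ (y : EuclideanSpace ℝ (Fin n)) (t : ℝ) (_ : dist y x < A * t) (_ : 0 < t)
      (_ : t < a * mfun x),
    ((gaussMeasure n (ball y (A * t)))⁻¹ *
        ∫⁻ z in ball y (A * t), ENNReal.ofReal ((mehler n u (t ^ 2) z) ^ 2) ∂gaussMeasure n) ^
      (1 / 2 : ℝ)

/-- The admissible (gaussian) Hardy–Littlewood maximal function `M*_a f (x)`. -/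
def Mstar (n : ℕ) (a : ℝ) (f : EuclideanSpace ℝ (Fin n) → ℝ)
    (x : EuclideanSpace ℝ (Fin n)) : ℝ≥0∞ :=
  ⨆ (r : ℝ) (_ : 0 < r) (_ : r ≤ a * mfun x),
    (gaussMeasure n (ball x r))⁻¹ *
      ∫⁻ y in ball x r, ENNReal.ofReal |f y| ∂gaussMeasure n

/-- The admissible cone `Γ^{(A,a)}_x(γ)`. -/
def cone (n : ℕ) (A a : ℝ) (x : EuclideanSpace ℝ (Fin n)) :
    Set (EuclideanSpace ℝ (Fin n) × ℝ) :=
  {p | dist p.1 x < A * p.2 ∧ 0 < p.2 ∧ p.2 < a * mfun x}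

/-- The modified admissible cone `Γ̃^{(A,a)}_x(γ)`. -/
def coneT (n : ℕ) (A a : ℝ) (x : EuclideanSpace ℝ (Fin n)) :
    Set (EuclideanSpace ℝ (Fin n) × ℝ) :=
  {p | dist p.1 x < A * p.2 ∧ 0 < p.2 ∧ p.2 < a * mfun p.1}

/-- The dyadic cube `2^{-k}(v + [0,1)ⁿ)` of scale `k`. -/
def dyadicCube (n k : ℕ) (v : Fin n → ℤ) : Set (EuclideanSpace ℝ (Fin n)) :=
  {x | ∀ i, x i ∈ Set.Ico ((2 : ℝ) ^ (-(k : ℤ)) * v i) ((2 : ℝ) ^ (-(k : ℤ)) * (v i + 1))}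

/-- The centre of the dyadic cube `2^{-k}(v + [0,1)ⁿ)`. -/
def cubeCenter (n k : ℕ) (v : Fin n → ℤ) : EuclideanSpace ℝ (Fin n) :=
  WithLp.toLp 2 (fun i => (2 : ℝ) ^ (-(k : ℤ)) * (v i + 1 / 2))

/-- The layers `L_0 = [-1,1)ⁿ`, `L_l = [-2^l,2^l)ⁿ \ [-2^{l-1},2^{l-1})ⁿ`. -/
def layer (n : ℕ) : ℕ → Set (EuclideanSpace ℝ (Fin n))
  | 0 => {x | ∀ i, x i ∈ Set.Ico (-1 : ℝ) 1}
  | (l + 1) =>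
      {x | ∀ i, x i ∈ Set.Ico (-(2 : ℝ) ^ (l + 1)) ((2 : ℝ) ^ (l + 1))} \
        {x | ∀ i, x i ∈ Set.Ico (-(2 : ℝ) ^ l) ((2 : ℝ) ^ l)}

/-- The cube `α ∘ Q` with the same centre as `Q = 2^{-k}(v + [0,1)ⁿ)` and `α` times
its side-length. -/
def scaledCube (n k : ℕ) (v : Fin n → ℤ) (α : ℝ) : Set (EuclideanSpace ℝ (Fin n)) :=
  {x | ∀ i, x i ∈ Set.Ico (cubeCenter n k v i - α * (2 : ℝ) ^ (-(k : ℤ)) / 2)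
      (cubeCenter n k v i + α * (2 : ℝ) ^ (-(k : ℤ)) / 2)}

/-- The Ornstein–Uhlenbeck operator `Lf(x) = -Δf(x) + x·∇f(x)`. -/
def OU (n : ℕ) (f : EuclideanSpace ℝ (Fin n) → ℂ) (x : EuclideanSpace ℝ (Fin n)) : ℂ :=
  -(∑ i : Fin n, iteratedFDeriv ℝ 2 f x ![EuclideanSpace.single i 1, EuclideanSpace.single i 1]) +
    fderiv ℝ f x x


/-!
Cover `O'` by the balls `B(x, d(x,F))`, `x ∈ O'`. By Besicovitch's covering theorem they can be
sorted into `N = N(n)` subfamilies of pairwise disjoint balls which together cover `O'`. Each such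
ball contains a ball of radius `d(x,F) / (16 (1 + 2a))` lying in `O`, centred near a nearly
closest point of `F`. As the radius `d(x,F) < 2a m(x)` is admissible, the gaussian density varies
on `B(x, d(x,F))` by a factor bounded in terms of `a` only, so the gaussian measure of the big ball
is at most `C₀(a,n)` times that of the small one. Summing over each disjoint subfamily gives
`γ(O') ≤ N C₀ γ(O)`.
-/

theorem Besicovitch.exists_measure_le_nat_mul_measure (α : Type*) [MetricSpace α]
    [TopologicalSpace.SeparableSpace α] [HasBesicovitchCovering α] [MeasurableSpace α] :
    ∃ N : ℕ, ∀ (μ : Measure α) (s t : Set α) (R : ℝ) (C : ℝ≥0∞),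
      (∀ x ∈ s, ∃ r ∈ Ioc 0 R, ∃ u ⊆ closedBall x r ∩ t,
        MeasurableSet u ∧ μ (ball x r) ≤ C * μ u) →
      μ s ≤ N * C * μ t := by
  obtain ⟨N, τ, hτ, hN⟩ := HasBesicovitchCovering.no_satelliteConfig (α := α)
  refine ⟨N, fun μ s t R C h => ?_⟩
  choose r hr u hu hum hμu using fun x : s => h x x.2
  let q : Besicovitch.BallPackage s α :=
    { c := (↑), r := r, rpos := fun x => (hr x).1, r_bound := R, r_le := fun x => (hr x).2 }
  obtain ⟨f, hfdisj, hcov⟩ := Besicovitch.exist_disjoint_covering_families hτ hN q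
  have hcount : ∀ i, (f i).Countable := fun i =>
    ((hfdisj i).mono fun x => ball_subset_closedBall).countable_of_isOpen
      (fun _ _ => isOpen_ball) fun x _ => nonempty_ball.2 (hr x).1
  have hfamily : ∀ i, μ (⋃ x ∈ f i, ball (x : α) (r x)) ≤ C * μ t := fun i =>
    calc μ (⋃ x ∈ f i, ball (x : α) (r x))
        ≤ ∑' x : f i, μ (ball (x : α) (r x)) := measure_biUnion_le _ (hcount i) _
      _ ≤ ∑' x : f i, C * μ (u x) := ENNReal.tsum_le_tsum fun x => hμu x
      _ = C * μ (⋃ x ∈ f i, u x) := by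
        rw [ENNReal.tsum_mul_left, measure_biUnion (hcount i)
          ((hfdisj i).mono fun x => (hu x).trans inter_subset_left) fun x _ => hum x]
      _ ≤ C * μ t := by
        gcongr
        exact iUnion₂_subset fun x _ => (hu x).trans inter_subset_right
  calc μ s ≤ μ (⋃ i, ⋃ x ∈ f i, ball (x : α) (r x)) :=
        measure_mono fun x hx => hcov ⟨⟨x, hx⟩, rfl⟩
    _ ≤ ∑ i, μ (⋃ x ∈ f i, ball (x : α) (r x)) := measure_iUnion_fintype_le _ _
    _ ≤ ∑ _i : Fin N, C * μ t := Finset.sum_le_sum fun i _ => hfamily i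
    _ = N * C * μ t := by simp [mul_assoc]

lemma exists_ball_subset_infDist_lt {E : Type*} [NormedAddCommGroup E] [NormedSpace ℝ E]
    {F : Set E} (hF : F.Nonempty) {x : E} (hx : 0 < infDist x F) {δ : ℝ} (hδ0 : 0 < δ)
    (hδ1 : δ ≤ 1) :
    ∃ z, ball z (δ * infDist x F / 8) ⊆
      ball x (infDist x F) ∩ {w | 0 < infDist w F ∧ infDist w F < δ * infDist x F} := by
  set d := infDist x F
  obtain ⟨y, hyF, hxy⟩ : ∃ y ∈ F, dist x y < (1 + δ / 4) * d :=
    (infDist_lt_iff hF).1 (by nlinarith)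
  have hdy : d ≤ dist y x := dist_comm x y ▸ infDist_le_dist_of_mem hyF
  set z := AffineMap.lineMap y x (δ / 2)
  have hzy : dist z y = δ / 2 * dist y x := by
    rw [dist_lineMap_left, Real.norm_of_nonneg (by positivity)]
  have hxz : dist x z = (1 - δ / 2) * dist y x := by
    rw [dist_right_lineMap, Real.norm_of_nonneg (by linarith)]
  rw [dist_comm] at hxy
  refine ⟨z, fun w hw => ?_⟩
  have hwz : dist w z < δ * d / 8 := hw
  have hxw : dist x w < (1 - δ / 8) * d := by
    nlinarith [dist_triangle x z w, dist_comm z w]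
  have hwF_le : infDist w F < δ * d := by
    nlinarith [infDist_le_dist_of_mem (x := w) hyF, dist_triangle w z y]
  have hwF_ge : d ≤ infDist w F + dist x w := infDist_le_infDist_add_dist
  exact ⟨mem_ball'.2 (by nlinarith), by nlinarith, hwF_le⟩

section Gaussian

variable {n : ℕ} {a : ℝ}

lemma gaussMeasure_le_ofReal_mul_volume {S : Set (EuclideanSpace ℝ (Fin n))}
    {x : EuclideanSpace ℝ (Fin n)} {r : ℝ} (hS : S ⊆ ball x r) :
    gaussMeasure n S ≤
      ENNReal.ofReal ((2 * Real.pi) ^ (-(n : ℝ) / 2) * Real.exp ((2 * r * ‖x‖ - ‖x‖ ^ 2) / 2)) *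
        volume S := by
  rw [gaussMeasure, withDensity_apply', ← setLIntegral_const]
  refine setLIntegral_mono measurable_const fun w hw => ?_
  have hr : 0 ≤ r := dist_nonneg.trans (hS hw).le
  have hwx : ‖x‖ - ‖w‖ < r := (norm_sub_norm_le x w).trans_lt (mem_ball'.1 (hS hw))
  gcongr
  rcases le_total ‖w‖ ‖x‖ with h | h
  · nlinarith [norm_nonneg w]
  · nlinarith [mul_self_le_mul_self (norm_nonneg x) h, mul_nonneg hr (norm_nonneg x)]

lemma ofReal_mul_volume_le_gaussMeasure {S : Set (EuclideanSpace ℝ (Fin n))}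
    {x : EuclideanSpace ℝ (Fin n)} {r : ℝ} (hS : S ⊆ ball x r) :
    ENNReal.ofReal ((2 * Real.pi) ^ (-(n : ℝ) / 2) * Real.exp (-(‖x‖ + r) ^ 2 / 2)) * volume S ≤
      gaussMeasure n S := by
  rw [gaussMeasure, withDensity_apply', ← setLIntegral_const]
  refine setLIntegral_mono (by fun_prop) fun w hw => ?_
  have hwx : ‖w‖ - ‖x‖ < r := (norm_sub_norm_le w x).trans_lt (mem_ball.1 (hS hw))
  gcongr
  nlinarith [norm_nonneg w]

/-- The gaussian density varies by at most the factor `exp (2 r ‖x‖ + r² / 2)` on `ball x r`. -/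
lemma gaussMeasure_ball_le_of_ball_subset {x z : EuclideanSpace ℝ (Fin n)} {r ρ : ℝ}
    (hρ : 0 < ρ) (hsub : ball z ρ ⊆ ball x r) :
    gaussMeasure n (ball x r) ≤
      ENNReal.ofReal (Real.exp (2 * r * ‖x‖ + r ^ 2 / 2) * (r / ρ) ^ n) *
        gaussMeasure n (ball z ρ) := by
  have hr : 0 < r := dist_nonneg.trans_lt (mem_ball.1 (hsub (mem_ball_self hρ)))
  set c : ℝ := (2 * Real.pi) ^ (-(n : ℝ) / 2)
  have hvol : volume (ball x r) = ENNReal.ofReal ((r / ρ) ^ n) * volume (ball z ρ) := by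
    rw [← div_mul_cancel₀ r hρ.ne', Measure.addHaar_ball_mul_of_pos _ _ (by positivity),
      finrank_euclideanSpace_fin, Measure.addHaar_ball_center volume z, div_mul_cancel₀ r hρ.ne']
  have hexp : c * Real.exp ((2 * r * ‖x‖ - ‖x‖ ^ 2) / 2) =
      Real.exp (2 * r * ‖x‖ + r ^ 2 / 2) * (c * Real.exp (-(‖x‖ + r) ^ 2 / 2)) := by
    rw [mul_left_comm, ← Real.exp_add]
    ring_nf
  calc gaussMeasure n (ball x r)
      ≤ ENNReal.ofReal (c * Real.exp ((2 * r * ‖x‖ - ‖x‖ ^ 2) / 2)) * volume (ball x r) :=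
        gaussMeasure_le_ofReal_mul_volume subset_rfl
    _ = ENNReal.ofReal (Real.exp (2 * r * ‖x‖ + r ^ 2 / 2) * (r / ρ) ^ n) *
        (ENNReal.ofReal (c * Real.exp (-(‖x‖ + r) ^ 2 / 2)) * volume (ball z ρ)) := by
        rw [hvol, hexp, ENNReal.ofReal_mul (by positivity), ENNReal.ofReal_mul (by positivity),
          ENNReal.ofReal_mul (by positivity)]
        ring
    _ ≤ _ := by gcongr; exact ofReal_mul_volume_le_gaussMeasure hsub

lemma mfun_pos (x : EuclideanSpace ℝ (Fin n)) : 0 < mfun x := by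
  unfold mfun
  split_ifs with h
  · exact one_pos
  · exact inv_pos.2 (by linarith)

lemma mfun_le_one (x : EuclideanSpace ℝ (Fin n)) : mfun x ≤ 1 := by
  unfold mfun
  split_ifs with h
  · exact le_rfl
  · exact inv_le_one_of_one_le₀ (by linarith)

lemma mfun_mul_norm_le_one (x : EuclideanSpace ℝ (Fin n)) : mfun x * ‖x‖ ≤ 1 := by
  unfold mfun
  split_ifs with h
  · simpa using h
  · rw [inv_mul_cancel₀ (by linarith)]

lemma mfun_div_le_mfun_of_dist_le {x w : EuclideanSpace ℝ (Fin n)} {c : ℝ} (hc : 0 ≤ c)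
    (h : dist w x ≤ c * mfun x) : mfun x / (1 + c) ≤ mfun w := by
  have hw : ‖w‖ ≤ ‖x‖ + c * mfun x := by
    linarith [norm_le_norm_add_norm_sub' w x, dist_eq_norm w x]
  have h1 := mfun_pos x
  have h2 := mfun_le_one x
  have h3 := mfun_mul_norm_le_one x
  rw [div_le_iff₀ (by linarith)]
  by_cases hw1 : ‖w‖ ≤ 1
  · rw [show mfun w = 1 from if_pos hw1]
    nlinarith
  · rw [show mfun w = ‖w‖⁻¹ from if_neg hw1, inv_mul_eq_div, le_div_iff₀ (by linarith)]
    nlinarith [mul_le_mul_of_nonneg_left hw h1.le,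
      mul_le_mul_of_nonneg_left h2 (mul_nonneg hc h1.le)]

lemma exists_ball_subset_admissible {F : Set (EuclideanSpace ℝ (Fin n))}
    (hF : F.Nonempty) {x : EuclideanSpace ℝ (Fin n)} (hx : 0 < infDist x F)
    (hxa : infDist x F < 2 * a * mfun x) :
    ∃ z, ball z (infDist x F / (16 * (1 + 2 * a))) ⊆
      ball x (infDist x F) ∩ {w | 0 < infDist w F ∧ infDist w F ≤ a * mfun w} := by
  set d := infDist x F
  have ha : 0 < a := by nlinarith [mfun_pos x]
  obtain ⟨z, hz⟩ := exists_ball_subset_infDist_lt hF hx (δ := (2 * (1 + 2 * a))⁻¹)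
    (by positivity) (inv_le_one_of_one_le₀ (by linarith))
  have hρ : (2 * (1 + 2 * a))⁻¹ * d / 8 = d / (16 * (1 + 2 * a)) := by
    field_simp
    ring
  refine ⟨z, fun w hw => ?_⟩
  obtain ⟨hwx, hw0, hwF⟩ := hz (hρ ▸ hw)
  have hmw : mfun x / (1 + 2 * a) ≤ mfun w :=
    mfun_div_le_mfun_of_dist_le (by positivity) (by linarith [mem_ball.1 hwx])
  refine ⟨hwx, hw0, ?_⟩
  calc infDist w F ≤ d / (2 * (1 + 2 * a)) := by rw [div_eq_inv_mul]; exact hwF.le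
    _ ≤ a * (mfun x / (1 + 2 * a)) := by
      rw [div_mul_eq_div_div, mul_div_assoc']
      gcongr
      linarith
    _ ≤ a * mfun w := by gcongr

lemma gaussMeasure_ball_le_admissible {x z : EuclideanSpace ℝ (Fin n)} {d : ℝ} (hd : 0 < d)
    (hxa : d < 2 * a * mfun x) (hsub : ball z (d / (16 * (1 + 2 * a))) ⊆ ball x d) :
    gaussMeasure n (ball x d) ≤
      ENNReal.ofReal (Real.exp (4 * a + 2 * a ^ 2) * (16 * (1 + 2 * a)) ^ n) *
        gaussMeasure n (ball z (d / (16 * (1 + 2 * a)))) := by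
  have ha : 0 < a := by nlinarith [mfun_pos x]
  have hd_le : d ≤ 2 * a := by nlinarith [mfun_le_one x]
  have hdx : d * ‖x‖ ≤ 2 * a := by
    nlinarith [mul_le_mul_of_nonneg_right hxa.le (norm_nonneg x), mfun_mul_norm_le_one x]
  refine (gaussMeasure_ball_le_of_ball_subset (by positivity) hsub).trans ?_
  rw [div_div_cancel₀ hd.ne']
  gcongr ENNReal.ofReal (Real.exp ?_ * _) * _
  nlinarith

end Gaussian

/-- `γ(O') ≤ C γ(O)` with `C` depending only on `a` and `n`. -/
theorem gaussian_measure_Oprime_le (n : ℕ) (a : ℝ) (ha : 0 < a) :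
    ∃ C > (0 : ℝ), ∀ F : Set (EuclideanSpace ℝ (Fin n)), F.Nonempty →
      gaussMeasure n {x | 0 < infDist x F ∧ infDist x F < 2 * a * mfun x} ≤
        ENNReal.ofReal C *
          gaussMeasure n {x | 0 < infDist x F ∧ infDist x F ≤ a * mfun x} := by
  obtain ⟨N, hN⟩ := Besicovitch.exists_measure_le_nat_mul_measure (EuclideanSpace ℝ (Fin n))
  set C₀ := Real.exp (4 * a + 2 * a ^ 2) * (16 * (1 + 2 * a)) ^ n
  refine ⟨(N + 1) * C₀, by positivity, fun F hF => ?_⟩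
  calc _ ≤ N * ENNReal.ofReal C₀ *
        gaussMeasure n {x | 0 < infDist x F ∧ infDist x F ≤ a * mfun x} :=
        hN _ _ _ (2 * a) _ fun x hx => ?_
    _ ≤ _ := by
      rw [ENNReal.ofReal_mul (by positivity : (0 : ℝ) ≤ N + 1), ← Nat.cast_succ,
        ENNReal.ofReal_natCast]
      gcongr
      exact N.le_succ
  have hd_le : infDist x F ≤ 2 * a :=
    hx.2.le.trans (mul_le_of_le_one_right (by positivity) (mfun_le_one x))
  obtain ⟨z, hz⟩ := exists_ball_subset_admissible hF hx.1 hx.2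
  exact ⟨infDist x F, ⟨hx.1, hd_le⟩, _, hz.trans (inter_subset_inter_left _ ball_subset_closedBall),
    measurableSet_ball, gaussMeasure_ball_le_admissible hx.1 hx.2 (hz.trans inter_subset_left)⟩

end
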